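/- For N = 1 and x₁ = M, the partition function is given explicitly by W_{M,1}(u|v₁,…,v_M|M|a₁₂) = ([−u + v_M + a₁₂ + M − 1]/[a₁₂ + M − 1]) · ∏_{k=1}^{M−1} ([1 + u − v_k]/[1]). -/
import Mathlib


open Complex

noncomputable section

/-- The half period magnitude `K₁` for elliptic nome `q`. -/
def Kone (q : ℝ) : ℝ :=
  Real.pi / 2 * ∏' n : ℕ,
    ((1 + q ^ (2 * n + 1)) / (1 - q ^ (2 * n + 1)) *
      ((1 - q ^ (2 * n + 2)) / (1 + q ^ (2 * n + 2)))) ^ 2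

/-- The half period magnitude `K₂` for elliptic nome `q`. -/
def Ktwo (q : ℝ) : ℝ := -(Kone q / Real.pi) * Real.log q

/-- The elliptic theta function `H`. -/
def theta (q : ℝ) (u : ℂ) : ℂ :=
  2 * (q : ℂ) ^ (1 / 4 : ℂ) * Complex.sin (Real.pi * u / (2 * (Kone q : ℂ))) *
    ∏' n : ℕ,
      ((1 - 2 * (q : ℂ) ^ (2 * n + 2) * Complex.cos (Real.pi * u / (Kone q : ℂ)) +
          (q : ℂ) ^ (4 * n + 4)) * (1 - (q : ℂ) ^ (2 * n + 2)))

/-- The bracket `[u] = H(λu)`. -/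
def brak (q : ℝ) (lam : ℂ) (u : ℂ) : ℂ := theta q (lam * u)

/-- Unit vector ê₁. -/
def e1 : ℤ × ℤ := (1, 0)

/-- Unit vector ê₂. -/
def e2 : ℤ × ℤ := (0, 1)

/-- The scalar `a₁₂ = a₁ + a₂ + ω₁₂` attached to a state vector. -/
def aSc (ω12 : ℂ) (a : ℤ × ℤ) : ℂ := (a.1 : ℂ) + (a.2 : ℂ) + ω12

/-- The face weights of the Deguchi-Martin model. -/
def faceW (q : ℝ) (lam ω12 : ℂ) (a b c d : ℤ × ℤ) (u v : ℂ) : ℂ :=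
  if b = a + e1 ∧ c = a + e1 ∧ d = a + e1 + e1 then
    brak q lam (1 + (u - v)) / brak q lam 1
  else if b = a + e2 ∧ c = a + e2 ∧ d = a + e2 + e2 then
    brak q lam (1 - (u - v)) / brak q lam 1
  else if b = a + e2 ∧ c = a + e1 ∧ d = a + e1 + e2 then
    brak q lam (u - v) * brak q lam (aSc ω12 a - 1) / (brak q lam 1 * brak q lam (aSc ω12 a))
  else if b = a + e1 ∧ c = a + e2 ∧ d = a + e1 + e2 then
    brak q lam (u - v) * brak q lam (-aSc ω12 a - 1) / (brak q lam 1 * brak q lam (-aSc ω12 a))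
  else if b = a + e1 ∧ c = a + e1 ∧ d = a + e1 + e2 then
    brak q lam (aSc ω12 a - (u - v)) / brak q lam (aSc ω12 a)
  else if b = a + e2 ∧ c = a + e2 ∧ d = a + e1 + e2 then
    brak q lam (-aSc ω12 a - (u - v)) / brak q lam (-aSc ω12 a)
  else 0

/-- Number of the integers `x₁ < ⋯ < x_N` that are `≤ k`. -/
def btmCount (N : ℕ) (x : ℕ → ℕ) (k : ℕ) : ℕ :=
  ((Finset.Icc 1 N).filter fun j => x j ≤ k).card

open scoped Classical in
/-- The partition function `W_{M,N}(u₁,…,u_N|v₁,…,v_M|x₁,…,x_N|a₁₂)` of the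
Deguchi-Martin model: the sum over all state-vector configurations of the
`N`-row, `M`-column lattice with the prescribed boundary of the product of all
`M·N` face weights. -/
def partW (q : ℝ) (lam ω12 : ℂ) (M N : ℕ) (u v : ℕ → ℂ) (x : ℕ → ℕ)
    (a : ℤ × ℤ) : ℂ :=
  ∑' s : Fin (N + 1) × Fin (M + 1) → ℤ × ℤ,
    if (∀ k : Fin (M + 1), s (0, k) = a + ((k : ℕ) : ℤ) • e1) ∧
       (∀ i : Fin (N + 1), s (i, 0) = a + ((i : ℕ) : ℤ) • e1) ∧
       (∀ i : Fin (N + 1), s (i, Fin.last M) = a + (M : ℤ) • e1 + ((i : ℕ) : ℤ) • e2) ∧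
       (∀ k : Fin (M + 1), s (Fin.last N, k) =
          a + ((N : ℤ) + ((k : ℕ) : ℤ) - (btmCount N x (k : ℕ) : ℤ)) • e1 +
            (btmCount N x (k : ℕ) : ℤ) • e2)
    then
      ∏ i : Fin N, ∏ k : Fin M,
        faceW q lam ω12 (s (i.castSucc, k.castSucc)) (s (i.castSucc, k.succ))
          (s (i.succ, k.castSucc)) (s (i.succ, k.succ)) (u (N - (i : ℕ))) (v ((k : ℕ) + 1))
    else 0


lemma btmCount_one (x : ℕ → ℕ) (n : ℕ) :
    btmCount 1 x n = if x 1 ≤ n then 1 else 0 := by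
  classical
  simp [btmCount, Finset.Icc_self, Finset.filter_singleton, apply_ite Finset.card]

lemma aSc_shift (ω12 : ℂ) (a : ℤ × ℤ) (m : ℤ) :
    aSc ω12 (a + m • e1) = aSc ω12 a + m := by
  simp [aSc, e1, Prod.smul_mk]; ring

lemma faceW_caseE (q : ℝ) (lam ω12 : ℂ) (a : ℤ × ℤ) (m : ℤ) (u v : ℂ) :
    faceW q lam ω12 (a + m • e1) (a + (m + 1) • e1) (a + (m + 1) • e1)
      (a + (m + 2) • e1) u v = brak q lam (1 + (u - v)) / brak q lam 1 := by
  rw [faceW, if_pos]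
  refine ⟨?_, ?_, ?_⟩ <;> · simp [e1, Prod.ext_iff, Prod.smul_mk]; try omega

lemma faceW_caseF (q : ℝ) (lam ω12 : ℂ) (a : ℤ × ℤ) (m : ℤ) (u v : ℂ) :
    faceW q lam ω12 (a + m • e1) (a + (m + 1) • e1) (a + (m + 1) • e1)
      (a + (m + 1) • e1 + e2) u v =
      brak q lam (aSc ω12 a + m - (u - v)) / brak q lam (aSc ω12 a + m) := by
  rw [faceW, if_neg, if_neg, if_neg, if_neg, if_pos, aSc_shift]
  · refine ⟨?_, ?_, ?_⟩ <;> · simp [e1, e2, Prod.ext_iff, Prod.smul_mk]; try omega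
  all_goals · simp [e1, e2, Prod.ext_iff, Prod.smul_mk]; try omega

/-- for `N = 1` and `x₁ = M`,
`W_{M,1}(u|v₁,…,v_M|M|a₁₂) = ([-u+v_M+a₁₂+M-1]/[a₁₂+M-1]) ∏_{k=1}^{M-1}([1+u-v_k]/[1])`. -/
theorem statement9 (q : ℝ) (hq0 : 0 < q) (hq1 : q < 1) (lam : ℂ) (hlam : lam ≠ 0)
    (ω12 : ℂ) (M : ℕ) (hM : 1 ≤ M)
    (u v : ℕ → ℂ) (x : ℕ → ℕ) (hx1 : x 1 = M) (a : ℤ × ℤ)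
    (hbr1 : brak q lam 1 ≠ 0)
    (hbrA : ∀ b : ℤ × ℤ, brak q lam (aSc ω12 b) ≠ 0)
    (hbrA' : ∀ b : ℤ × ℤ, brak q lam (-aSc ω12 b) ≠ 0) :
    partW q lam ω12 M 1 u v x a =
      brak q lam (-u 1 + v M + aSc ω12 a + (M : ℂ) - 1) /
        brak q lam (aSc ω12 a + (M : ℂ) - 1) *
      ∏ k ∈ Finset.Icc 1 (M - 1), brak q lam (1 + u 1 - v k) / brak q lam 1 := by
  classical
  obtain ⟨M', rfl⟩ : ∃ M', M = M' + 1 := ⟨M - 1, by omega⟩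
  have hb : ∀ n : ℕ, btmCount 1 x n = if M' + 1 ≤ n then 1 else 0 := by
    intro n; rw [btmCount_one, hx1]
  set s₀ : Fin (1 + 1) × Fin (M' + 1 + 1) → ℤ × ℤ := fun p =>
    if (p.1 : ℕ) = 0 then a + ((p.2 : ℕ) : ℤ) • e1
    else a + ((1 : ℤ) + ((p.2 : ℕ) : ℤ) - (btmCount 1 x (p.2 : ℕ) : ℤ)) • e1 +
      (btmCount 1 x (p.2 : ℕ) : ℤ) • e2 with hs₀def
  have hs00 : ∀ k : Fin (M' + 1 + 1), s₀ (0, k) = a + ((k : ℕ) : ℤ) • e1 := by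
    intro k; simp [hs₀def]
  have hs01 : ∀ k : Fin (M' + 1 + 1), s₀ (1, k) =
      a + ((1 : ℤ) + ((k : ℕ) : ℤ) - (btmCount 1 x (k : ℕ) : ℤ)) • e1 +
        (btmCount 1 x (k : ℕ) : ℤ) • e2 := by
    intro k; simp [hs₀def]
  have fin2 : ∀ (P : Fin (1 + 1) → Prop), P 0 → P 1 → ∀ i, P i := by
    intro P h0 h1 i
    match i with
    | ⟨0, _⟩ => exact h0
    | ⟨1, _⟩ => exact h1
  rw [partW]
  refine Eq.trans (tsum_eq_single s₀ ?_) ?_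
  · intro s hs
    rw [if_neg]
    rintro ⟨h1, -, -, h4⟩
    refine hs (funext fun p => ?_)
    obtain ⟨i, k⟩ := p
    refine fin2 (fun i => s (i, k) = s₀ (i, k)) ?_ ?_ i
    · exact (h1 k).trans (hs00 k).symm
    · refine (show s (1, k) = _ from h4 k).trans ?_
      rw [hs01 k]
      norm_num
  · rw [if_pos]
    · rw [Fin.prod_univ_one]
      simp only [Fin.castSucc_zero, Fin.succ_zero_eq_one, Fin.val_zero, Nat.sub_zero]
      have hfac : ∀ k : Fin (M' + 1),
          faceW q lam ω12 (s₀ (0, k.castSucc)) (s₀ (0, k.succ)) (s₀ (1, k.castSucc))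
            (s₀ (1, k.succ)) (u 1) (v ((k : ℕ) + 1)) =
          if (k : ℕ) = M' then
            brak q lam (aSc ω12 a + ((M' : ℤ) : ℂ) - (u 1 - v (M' + 1))) /
              brak q lam (aSc ω12 a + ((M' : ℤ) : ℂ))
          else brak q lam (1 + (u 1 - v ((k : ℕ) + 1))) / brak q lam 1 := by
        intro k
        have hk : (k : ℕ) < M' + 1 := k.isLt
        have hcs : ((k.castSucc : Fin (M' + 1 + 1)) : ℕ) = (k : ℕ) := rfl
        have hsc : ((k.succ : Fin (M' + 1 + 1)) : ℕ) = (k : ℕ) + 1 := rfl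
        rw [hs00, hs00, hs01, hs01, hcs, hsc]
        have hb1 : (btmCount 1 x (k : ℕ) : ℤ) = 0 := by rw [hb]; simp; try omega
        rw [hb1]
        by_cases hkM : (k : ℕ) = M'
        · rw [if_pos hkM]
          have hb2 : (btmCount 1 x ((k : ℕ) + 1) : ℤ) = 1 := by rw [hb]; simp; try omega
          rw [hb2]
          have e2' : a + ((1 : ℤ) + ((k : ℕ) : ℤ) - 0) • e1 + (0 : ℤ) • e2
              = a + (((k : ℕ) : ℤ) + 1) • e1 := by
            simp [e1, e2, Prod.ext_iff, Prod.smul_mk]; try omega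
          have e3' : a + ((((k : ℕ) + 1 : ℕ)) : ℤ) • e1 = a + (((k : ℕ) : ℤ) + 1) • e1 := by
            simp [e1, Prod.ext_iff, Prod.smul_mk]; try omega
          have e4' : a + ((1 : ℤ) + (((k : ℕ) + 1 : ℕ) : ℤ) - 1) • e1 + (1 : ℤ) • e2
              = a + (((k : ℕ) : ℤ) + 1) • e1 + e2 := by
            simp [e1, e2, Prod.ext_iff, Prod.smul_mk]; try omega
          rw [e2', e3', e4', faceW_caseF]
          rw [hkM]
        · rw [if_neg hkM]
          have hb2 : (btmCount 1 x ((k : ℕ) + 1) : ℤ) = 0 := by rw [hb]; simp; try omega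
          rw [hb2]
          have e2' : a + ((1 : ℤ) + ((k : ℕ) : ℤ) - 0) • e1 + (0 : ℤ) • e2
              = a + (((k : ℕ) : ℤ) + 1) • e1 := by
            simp [e1, e2, Prod.ext_iff, Prod.smul_mk]; try omega
          have e3' : a + ((((k : ℕ) + 1 : ℕ)) : ℤ) • e1 = a + (((k : ℕ) : ℤ) + 1) • e1 := by
            simp [e1, Prod.ext_iff, Prod.smul_mk]; try omega
          have e4' : a + ((1 : ℤ) + (((k : ℕ) + 1 : ℕ) : ℤ) - 0) • e1 + (0 : ℤ) • e2
              = a + (((k : ℕ) : ℤ) + 2) • e1 := by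
            simp [e1, e2, Prod.ext_iff, Prod.smul_mk]; try omega
          rw [e2', e3', e4', faceW_caseE]
      rw [Finset.prod_congr rfl fun k _ => hfac k]
      rw [Fin.prod_univ_castSucc]
      have hlastval : ((Fin.last M' : Fin (M' + 1)) : ℕ) = M' := rfl
      rw [hlastval, if_pos rfl]
      have hrest : (∏ k : Fin M',
          if ((k.castSucc : Fin (M' + 1)) : ℕ) = M' then
            brak q lam (aSc ω12 a + ((M' : ℤ) : ℂ) - (u 1 - v (M' + 1))) /
              brak q lam (aSc ω12 a + ((M' : ℤ) : ℂ))
          else brak q lam (1 + (u 1 - v (((k.castSucc : Fin (M' + 1)) : ℕ) + 1))) / brak q lam 1)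
          = ∏ k ∈ Finset.Icc 1 (M' + 1 - 1), brak q lam (1 + u 1 - v k) / brak q lam 1 := by
        rw [Finset.prod_congr rfl fun k _ =>
          if_neg (by exact Nat.ne_of_lt k.isLt : ¬((k.castSucc : Fin (M' + 1)) : ℕ) = M')]
        rw [Nat.add_sub_cancel]
        simp only [Fin.coe_castSucc]
        rw [Fin.prod_univ_eq_prod_range (fun n => brak q lam (1 + (u 1 - v (n + 1))) / brak q lam 1)]
        rw [show Finset.Icc 1 M' = Finset.Ico 1 (M' + 1) from (Finset.Ico_add_one_right_eq_Icc 1 M').symm,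
          Finset.prod_Ico_eq_prod_range]
        simp only [Nat.add_sub_cancel]
        refine Finset.prod_congr rfl fun n _ => ?_
        rw [Nat.add_comm 1 n]
        congr 1
        ring
      rw [hrest, mul_comm]
      congr 2
      · push_cast; ring
      · push_cast; ring
    · refine ⟨hs00, ?_, ?_, ?_⟩
      · refine fin2 _ ?_ ?_
        · exact hs00 0
        · rw [hs01 0]
          have hbz : (btmCount 1 x ((0 : Fin (M' + 1 + 1)) : ℕ) : ℤ) = 0 := by rw [hb]; simp
          rw [hbz]
          simp [e1, e2, Prod.ext_iff, Prod.smul_mk]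
      · refine fin2 _ ?_ ?_
        · rw [hs00]
          simp [e1, e2, Prod.ext_iff, Prod.smul_mk, Fin.val_last]
        · rw [hs01]
          have hbo : (btmCount 1 x ((Fin.last (M' + 1) : Fin (M' + 1 + 1)) : ℕ) : ℤ) = 1 := by
            rw [hb]; simp
          rw [hbo]
          simp [e1, e2, Prod.ext_iff, Prod.smul_mk, Fin.val_last]; try omega
      · intro k
        rw [show (Fin.last 1 : Fin (1 + 1)) = 1 from rfl, hs01 k]
        simp


end
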